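/- Let ω > 0, x, e ∈ ℝ³ and set v = F_ω(x) + e. Then for every t ≥ 0, the traveled distance satisfies D_{x,v}^ω(t) = ∫₀^t ‖v − F_ω(x + s v)‖ ds ≤ ‖e‖·(t + ω t²/2) + (ω² t²/2)·d_r(x). -/

import Mathlib

noncomputable def vec3 (a b c : ℝ) : EuclideanSpace ℝ (Fin 3) := WithLp.toLp 2 ![a, b, c]

noncomputable def Frot (ω : ℝ) (y : EuclideanSpace ℝ (Fin 3)) : EuclideanSpace ℝ (Fin 3) :=
  vec3 (-ω * y 1) (ω * y 0) 0

noncomputable def dr (x : EuclideanSpace ℝ (Fin 3)) : ℝ :=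
  Real.sqrt (x 0 ^ 2 + x 1 ^ 2)

noncomputable def Dtrav (ω : ℝ) (x v : EuclideanSpace ℝ (Fin 3)) (t : ℝ) : ℝ :=
  ∫ s in (0 : ℝ)..t, ‖v - Frot ω (x + s • v)‖

/-! The displacement `x + s v` enters the rotational field linearly, so the integrand is
`‖e - s F_ω(v)‖ ≤ ‖e‖ + s ‖F_ω(v)‖`, and `F_ω(v) = F_ω(F_ω(x)) + F_ω(e)` has norm at most
`ω² d_r(x) + ω ‖e‖`. Integrating the linear bound over `[0, t]` gives the estimate. -/

theorem integral_norm_sub_smul_le {E : Type*} [NormedAddCommGroup E] [NormedSpace ℝ E]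
    (e w : E) {t : ℝ} (ht : 0 ≤ t) :
    ∫ s in (0 : ℝ)..t, ‖e - s • w‖ ≤ ‖e‖ * t + ‖w‖ * (t ^ 2 / 2) := by
  have hle : ∀ s ∈ Set.Icc (0 : ℝ) t, ‖e - s • w‖ ≤ ‖e‖ + s * ‖w‖ := fun s hs =>
    calc ‖e - s • w‖ ≤ ‖e‖ + ‖s • w‖ := norm_sub_le _ _
      _ = ‖e‖ + s * ‖w‖ := by rw [norm_smul, Real.norm_of_nonneg hs.1]
  have hint : ∫ s in (0 : ℝ)..t, (‖e‖ + s * ‖w‖) = ‖e‖ * t + ‖w‖ * (t ^ 2 / 2) := by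
    have hlin : IntervalIntegrable (fun s : ℝ => s * ‖w‖) MeasureTheory.volume 0 t :=
      (continuous_id.mul continuous_const).intervalIntegrable 0 t
    rw [intervalIntegral.integral_add intervalIntegrable_const hlin,
      intervalIntegral.integral_const, intervalIntegral.integral_mul_const, integral_id]
    rw [smul_eq_mul]
    ring
  rw [← hint]
  exact intervalIntegral.integral_mono_on ht
    ((continuous_const.sub (continuous_id.smul continuous_const)).norm.intervalIntegrable _ _)
    ((continuous_const.add (continuous_id.mul continuous_const)).intervalIntegrable _ _) hle

section Frot

variable (ω : ℝ)

@[simp]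
lemma frot_apply_zero (y : EuclideanSpace ℝ (Fin 3)) : Frot ω y 0 = -ω * y 1 := by
  simp [Frot, vec3]

@[simp]
lemma frot_apply_one (y : EuclideanSpace ℝ (Fin 3)) : Frot ω y 1 = ω * y 0 := by
  simp [Frot, vec3]

@[simp]
lemma frot_apply_two (y : EuclideanSpace ℝ (Fin 3)) : Frot ω y 2 = 0 := by
  simp [Frot, vec3]

lemma frot_add (y z : EuclideanSpace ℝ (Fin 3)) : Frot ω (y + z) = Frot ω y + Frot ω z := by
  ext i
  fin_cases i <;>
    simp only [Fin.zero_eta, Fin.mk_one, Fin.reduceFinMk, Fin.isValue, frot_apply_zero,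
      frot_apply_one, frot_apply_two, PiLp.add_apply, add_zero] <;> ring

lemma frot_smul (c : ℝ) (y : EuclideanSpace ℝ (Fin 3)) : Frot ω (c • y) = c • Frot ω y := by
  ext i
  fin_cases i <;>
    simp only [Fin.zero_eta, Fin.mk_one, Fin.reduceFinMk, Fin.isValue, frot_apply_zero,
      frot_apply_one, frot_apply_two, PiLp.smul_apply, smul_eq_mul, mul_zero] <;> ring

lemma dr_le_norm (y : EuclideanSpace ℝ (Fin 3)) : dr y ≤ ‖y‖ := by
  rw [EuclideanSpace.norm_eq, Fin.sum_univ_three, dr]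
  simp only [Real.norm_eq_abs, sq_abs]
  exact Real.sqrt_le_sqrt (le_add_of_nonneg_right (sq_nonneg _))

variable {ω}

lemma norm_frot (hω : 0 ≤ ω) (y : EuclideanSpace ℝ (Fin 3)) : ‖Frot ω y‖ = ω * dr y := by
  rw [EuclideanSpace.norm_eq, Fin.sum_univ_three]
  simp only [Real.norm_eq_abs, sq_abs, frot_apply_zero, frot_apply_one, frot_apply_two]
  rw [show (-ω * y 1) ^ 2 + (ω * y 0) ^ 2 + 0 ^ 2 = ω ^ 2 * (y 0 ^ 2 + y 1 ^ 2) by ring,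
    Real.sqrt_mul (sq_nonneg ω), Real.sqrt_sq hω, dr]

lemma dr_frot (hω : 0 ≤ ω) (y : EuclideanSpace ℝ (Fin 3)) : dr (Frot ω y) = ω * dr y := by
  rw [← norm_frot hω, EuclideanSpace.norm_eq, Fin.sum_univ_three, dr]
  simp [mul_pow]

lemma norm_frot_le (hω : 0 ≤ ω) (y : EuclideanSpace ℝ (Fin 3)) : ‖Frot ω y‖ ≤ ω * ‖y‖ := by
  rw [norm_frot hω]
  exact mul_le_mul_of_nonneg_left (dr_le_norm y) hω

end Frot

theorem stmt_3 (ω : ℝ) (hω : 0 < ω) (x e : EuclideanSpace ℝ (Fin 3))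
    (v : EuclideanSpace ℝ (Fin 3)) (hv : v = Frot ω x + e) :
    ∀ t : ℝ, 0 ≤ t →
      Dtrav ω x v t ≤ ‖e‖ * (t + ω * t ^ 2 / 2) + ω ^ 2 * t ^ 2 / 2 * dr x := by
  intro t ht
  have hintegrand : ∀ s : ℝ, v - Frot ω (x + s • v) = e - s • Frot ω v := fun s => by
    rw [frot_add, frot_smul, hv]
    abel
  have hFv : ‖Frot ω v‖ ≤ ω * ‖e‖ + ω ^ 2 * dr x :=
    calc ‖Frot ω v‖ ≤ ‖Frot ω (Frot ω x)‖ + ‖Frot ω e‖ := by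
          rw [hv, frot_add]
          exact norm_add_le _ _
      _ ≤ ω ^ 2 * dr x + ω * ‖e‖ := by
        rw [norm_frot hω.le, dr_frot hω.le, ← mul_assoc, ← sq]
        gcongr
        exact norm_frot_le hω.le e
      _ = ω * ‖e‖ + ω ^ 2 * dr x := add_comm _ _
  calc Dtrav ω x v t = ∫ s in (0 : ℝ)..t, ‖e - s • Frot ω v‖ := by simp only [Dtrav, hintegrand]
    _ ≤ ‖e‖ * t + ‖Frot ω v‖ * (t ^ 2 / 2) := integral_norm_sub_smul_le e _ ht
    _ ≤ ‖e‖ * t + (ω * ‖e‖ + ω ^ 2 * dr x) * (t ^ 2 / 2) := by gcongr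
    _ = ‖e‖ * (t + ω * t ^ 2 / 2) + ω ^ 2 * t ^ 2 / 2 * dr x := by ring
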